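/- Let n be even with n ≥ 6. Every perfect matching M of the torus grid graph G_n has at most n²/2 flippable pairs. -/
import Mathlib


/-!
Dimer configurations (perfect matchings) on the torus grid graph `G_n` with vertex set
`ZMod n × ZMod n`, where `(v, i)` denotes the edge joining `v` and `v + e i`, with
`e 0 = (1,0)` and `e 1 = (0,1)`.  A plaquette is a point `p : ZMod n × ZMod n`, regarded
as the unit square with corners `p, p+e 0, p+e 1, p+e 0+e 1`.
-/

open scoped Classical
noncomputable section

namespace HQDMT

/-- Vertices (and also plaquettes) of the torus grid graph `G_n`. -/
abbrev VT (n : ℕ) : Type := ZMod n × ZMod n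

/-- Edges of `G_n`: `(v, i)` is the edge joining `v` and `v + eT n i`. -/
abbrev ET (n : ℕ) : Type := VT n × Fin 2

/-- The two unit vectors. -/
def eT (n : ℕ) : Fin 2 → VT n := fun i => if i = 0 then (1, 0) else (0, 1)

/-- The endpoints of an edge. -/
def endsT (n : ℕ) (ed : ET n) : Set (VT n) := {ed.1, ed.1 + eT n ed.2}

/-- `M` is a perfect matching of `G_n`: every vertex lies on exactly one edge of `M`. -/
def IsPMT (n : ℕ) (M : Set (ET n)) : Prop :=
  ∀ w : VT n, ∃! ed : ET n, ed ∈ M ∧ w ∈ endsT n ed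

/-- Plaquette `p` hosts a horizontal parallel dimer pair in `M`. -/
def HostsHT (n : ℕ) (M : Set (ET n)) (p : VT n) : Prop :=
  (p, (0 : Fin 2)) ∈ M ∧ (p + (0, 1), (0 : Fin 2)) ∈ M

/-- Plaquette `p` hosts a vertical parallel dimer pair in `M`. -/
def HostsVT (n : ℕ) (M : Set (ET n)) (p : VT n) : Prop :=
  (p, (1 : Fin 2)) ∈ M ∧ (p + (1, 0), (1 : Fin 2)) ∈ M

/-- Plaquette `p` hosts a parallel pair (horizontal or vertical). -/
def HostsParT (n : ℕ) (M : Set (ET n)) (p : VT n) : Prop := HostsHT n M p ∨ HostsVT n M p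

/-- The four boundary edges of the plaquette `p`. -/
def plaqEdgesT (n : ℕ) (p : VT n) : Set (ET n) :=
  {(p, (0 : Fin 2)), (p + (0, 1), (0 : Fin 2)), (p, (1 : Fin 2)), (p + (1, 0), (1 : Fin 2))}

/-- Flipping the plaquette `p`: the horizontal pair is replaced by the vertical one, or
vice versa (as a set operation, the symmetric difference with the plaquette's boundary). -/
def flipT (n : ℕ) (M : Set (ET n)) (p : VT n) : Set (ET n) := symmDiff M (plaqEdgesT n p)

/-- `{p, p + 2 eT n i}` is a flippable pair of `M`: one of the two plaquettes hosts a
horizontal pair and the other a vertical pair. -/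
def FlipPairT (n : ℕ) (M : Set (ET n)) (p : VT n) (i : Fin 2) : Prop :=
  (HostsHT n M p ∧ HostsVT n M (p + eT n i + eT n i)) ∨
  (HostsVT n M p ∧ HostsHT n M (p + eT n i + eT n i))

/-- The hQDM move at the pair `{p, p + 2 eT n i}`: both plaquettes are flipped. -/
def moveT (n : ℕ) (M : Set (ET n)) (p : VT n) (i : Fin 2) : Set (ET n) :=
  symmDiff M (plaqEdgesT n p ∪ plaqEdgesT n (p + eT n i + eT n i))

/-- Krylov equivalence: the equivalence relation on dimer configurations generated by
hQDM moves at flippable pairs.  The Krylov class of `M` is `{M' | KrylovT n M M'}`. -/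
def KrylovT (n : ℕ) (M M' : Set (ET n)) : Prop :=
  Relation.EqvGen (fun A B => ∃ p i, FlipPairT n A p i ∧ B = moveT n A p i) M M'

/-- The set of flippable pairs of `M`, as unordered pairs `{p, p + 2 eT n i}` of plaquettes. -/
def flipPairsT (n : ℕ) (M : Set (ET n)) : Set (Set (VT n)) :=
  {S : Set (VT n) | ∃ p i, FlipPairT n M p i ∧ S = {p, p + eT n i + eT n i}}

/-- The number of flippable pairs of `M`. -/
def nflipT (n : ℕ) (M : Set (ET n)) : ℕ := (flipPairsT n M).ncard

/-- The plaquette sublattice determined by the parities `a, b` of the two coordinates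
(well-defined for `n` even). -/
def onSubT (n : ℕ) (a b : ZMod 2) (p : VT n) : Prop :=
  ((p.1.val : ZMod 2) = a) ∧ ((p.2.val : ZMod 2) = b)

end HQDMT

namespace HQDMT

/-- Uniqueness of the matching edge at a vertex. -/
lemma uniq_edge {n : ℕ} {M : Set (ET n)} (hM : IsPMT n M) {ed ed' : ET n}
    (h : ed ∈ M) (h' : ed' ∈ M) {w : VT n} (hw : w ∈ endsT n ed) (hw' : w ∈ endsT n ed') :
    ed = ed' := by
  obtain ⟨e0, -, hu⟩ := hM w
  rw [hu ed ⟨h, hw⟩, hu ed' ⟨h', hw'⟩]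

lemma mem_ends_left {n : ℕ} (v : VT n) (i : Fin 2) : v ∈ endsT n (v, i) := Or.inl rfl

lemma mem_ends_right0 {n : ℕ} (v : VT n) : v + (1, 0) ∈ endsT n (v, (0 : Fin 2)) := by
  right; simp [eT]

lemma mem_ends_right1 {n : ℕ} (v : VT n) : v + (0, 1) ∈ endsT n (v, (1 : Fin 2)) := by
  right; simp [eT]

/-- A plaquette cannot host both a horizontal and a vertical pair. -/
lemma not_H_and_V {n : ℕ} {M : Set (ET n)} (hM : IsPMT n M) {p : VT n}
    (hH : HostsHT n M p) (hV : HostsVT n M p) : False := by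
  have := uniq_edge hM hH.1 hV.1 (mem_ends_left p 0) (mem_ends_left p 1)
  simpa using congrArg Prod.snd this

lemma no_adj1 {n : ℕ} {M : Set (ET n)} (hM : IsPMT n M) {p : VT n}
    (h1 : ((p, (0 : Fin 2)) : ET n) ∈ M) (h2 : ((p + (1, 0), (1 : Fin 2)) : ET n) ∈ M) :
    False := by
  have := uniq_edge hM h1 h2 (mem_ends_right0 p) (mem_ends_left (p + (1, 0)) 1)
  simpa using congrArg Prod.snd this

lemma no_adj2 {n : ℕ} {M : Set (ET n)} (hM : IsPMT n M) {q : VT n}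
    (h1 : ((q, (1 : Fin 2)) : ET n) ∈ M) (h2 : ((q + (0, 1), (0 : Fin 2)) : ET n) ∈ M) :
    False := by
  have := uniq_edge hM h1 h2 (mem_ends_right1 q) (mem_ends_left (q + (0, 1)) 0)
  simpa using congrArg Prod.snd this

lemma fp_of_H {n : ℕ} {M : Set (ET n)} (hM : IsPMT n M) {p : VT n} {i : Fin 2}
    (h : FlipPairT n M p i) (hH : HostsHT n M p) :
    HostsVT n M (p + eT n i + eT n i) := by
  rcases h with ⟨-, hv⟩ | ⟨hv, -⟩
  · exact hv
  · exact absurd (not_H_and_V hM hH hv) id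

lemma fp_of_not_H {n : ℕ} {M : Set (ET n)} {p : VT n} {i : Fin 2}
    (h : FlipPairT n M p i) (hH : ¬ HostsHT n M p) :
    HostsVT n M p ∧ HostsHT n M (p + eT n i + eT n i) := by
  rcases h with ⟨hh, -⟩ | h
  · exact absurd hh hH
  · exact h

/-- `eT` is nonzero. -/
lemma eT_ne_zero {n : ℕ} [Fact (1 < n)] (i : Fin 2) : eT n i ≠ 0 := by
  fin_cases i <;> simp [eT, Prod.ext_iff]

/-- A perfect matching has exactly `n²/2` edges (as `2·|M| = n²`). -/
lemma two_mul_ncard {n : ℕ} (h6 : 6 ≤ n) {M : Set (ET n)} (hM : IsPMT n M) :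
    2 * M.ncard = n ^ 2 := by
  haveI : NeZero n := ⟨by omega⟩
  haveI : Fact (1 < n) := ⟨by omega⟩
  classical
  have hMfin : M.Finite := Set.toFinite M
  choose f hf using hM
  have key : ∀ ed ∈ M, ∀ w : VT n, f w = ed ↔ w ∈ endsT n ed := by
    intro ed hed w
    constructor
    · rintro rfl; exact (hf w).1.2
    · intro hw; exact ((hf w).2 ed ⟨hed, hw⟩).symm
  have hcount := Finset.card_eq_sum_card_fiberwise
    (s := (Finset.univ : Finset (VT n))) (t := hMfin.toFinset) (f := f)
    (fun w _ => by simpa using (hf w).1.1)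
  have hfib : ∀ ed ∈ hMfin.toFinset,
      (Finset.univ.filter (fun w => f w = ed)).card = 2 := by
    intro ed hed
    rw [Set.Finite.mem_toFinset] at hed
    have hset : Finset.univ.filter (fun w => f w = ed)
        = {ed.1, ed.1 + eT n ed.2} := by
      ext w
      simp [key ed hed w, endsT]
    rw [hset]
    rw [Finset.card_insert_of_notMem, Finset.card_singleton]
    simp only [Finset.mem_singleton]
    intro h
    exact eT_ne_zero ed.2 ((left_eq_add).mp h)
  have hsum : (Finset.univ : Finset (VT n)).card = 2 * hMfin.toFinset.card := by
    rw [hcount, Finset.sum_congr rfl hfib, Finset.sum_const, smul_eq_mul, mul_comm]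
  have hcardV : (Finset.univ : Finset (VT n)).card = n ^ 2 := by
    simp [Finset.card_univ, ZMod.card, sq]
  rw [Set.ncard_eq_toFinset_card M hMfin, ← hsum, hcardV]

/-- The dimer assigned to the flippable pair `{p, p + 2 eT n i}` (given as `(p, i)`). -/
def Dmap (n : ℕ) (M : Set (ET n)) : VT n × Fin 2 → ET n := fun x =>
  if x.2 = 0 then
    (if HostsHT n M x.1 then (x.1 + (1, 0) + (1, 0), (1 : Fin 2))
      else (x.1 + (1, 0), (1 : Fin 2)))
  else
    (if HostsHT n M x.1 then (x.1 + (0, 1), (0 : Fin 2))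
      else (x.1 + (0, 1) + (0, 1), (0 : Fin 2)))

lemma Dmap_zero {n : ℕ} (M : Set (ET n)) (p : VT n) :
    Dmap n M (p, 0) = if HostsHT n M p then (p + (1, 0) + (1, 0), (1 : Fin 2))
      else (p + (1, 0), (1 : Fin 2)) := rfl

lemma Dmap_one {n : ℕ} (M : Set (ET n)) (p : VT n) :
    Dmap n M (p, 1) = if HostsHT n M p then (p + (0, 1), (0 : Fin 2))
      else (p + (0, 1) + (0, 1), (0 : Fin 2)) := rfl

lemma Dmap_mem {n : ℕ} {M : Set (ET n)} (hM : IsPMT n M) {p : VT n} {i : Fin 2}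
    (hfp : FlipPairT n M p i) : Dmap n M (p, i) ∈ M := by
  have hi : i = 0 ∨ i = 1 := by omega
  rcases hi with rfl | rfl
  · rw [Dmap_zero]
    by_cases hH : HostsHT n M p
    · rw [if_pos hH]
      have hv := fp_of_H hM hfp hH
      simp only [eT, if_pos rfl] at hv
      exact hv.1
    · rw [if_neg hH]
      exact (fp_of_not_H hfp hH).1.2
  · rw [Dmap_one]
    by_cases hH : HostsHT n M p
    · rw [if_pos hH]
      exact hH.2
    · rw [if_neg hH]
      have hh := (fp_of_not_H hfp hH).2
      have he : eT n 1 = ((0 : ZMod n), (1 : ZMod n)) := by simp [eT]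
      rw [he] at hh
      exact hh.1

lemma Dmap_injOn {n : ℕ} {M : Set (ET n)} (hM : IsPMT n M) :
    Set.InjOn (Dmap n M) {x : VT n × Fin 2 | FlipPairT n M x.1 x.2} := by
  rintro ⟨p, i⟩ hx ⟨q, j⟩ hy hxy
  have hfp : FlipPairT n M p i := hx
  have hfq : FlipPairT n M q j := hy
  have hi : i = 0 ∨ i = 1 := by omega
  have hj : j = 0 ∨ j = 1 := by omega
  rcases hi with rfl | rfl <;> rcases hj with rfl | rfl
  · -- both direction 0
    rw [Dmap_zero, Dmap_zero] at hxy
    by_cases hHp : HostsHT n M p <;> by_cases hHq : HostsHT n M q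
    · rw [if_pos hHp, if_pos hHq] at hxy
      have h1 : p + (1, 0) + (1, 0) = q + (1, 0) + (1, 0) := congrArg Prod.fst hxy
      rw [add_right_cancel (add_right_cancel h1)]
    · rw [if_pos hHp, if_neg hHq] at hxy
      exfalso
      have h1 : p + (1, 0) + (1, 0) = q + (1, 0) := congrArg Prod.fst hxy
      have hq : q = p + (1, 0) := (add_right_cancel h1).symm
      exact no_adj1 hM hHp.1 (hq ▸ (fp_of_not_H hfq hHq).1.1)
    · rw [if_neg hHp, if_pos hHq] at hxy
      exfalso
      have h1 : p + (1, 0) = q + (1, 0) + (1, 0) := congrArg Prod.fst hxy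
      have hp : p = q + (1, 0) := add_right_cancel h1
      exact no_adj1 hM hHq.1 (hp ▸ (fp_of_not_H hfp hHp).1.1)
    · rw [if_neg hHp, if_neg hHq] at hxy
      have h1 : p + (1, 0) = q + (1, 0) := congrArg Prod.fst hxy
      rw [add_right_cancel h1]
  · -- direction 0 vs 1 : second components differ
    rw [Dmap_zero, Dmap_one] at hxy
    exfalso
    by_cases hHp : HostsHT n M p <;> by_cases hHq : HostsHT n M q <;>
      first
        | (rw [if_pos hHp] at hxy) | (rw [if_neg hHp] at hxy)
    all_goals
      first
        | (rw [if_pos hHq] at hxy) | (rw [if_neg hHq] at hxy)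
    all_goals first
      | exact one_ne_zero (congrArg Prod.snd hxy)
      | exact zero_ne_one (congrArg Prod.snd hxy)
  · -- direction 1 vs 0
    rw [Dmap_one, Dmap_zero] at hxy
    exfalso
    by_cases hHp : HostsHT n M p <;> by_cases hHq : HostsHT n M q <;>
      first
        | (rw [if_pos hHp] at hxy) | (rw [if_neg hHp] at hxy)
    all_goals
      first
        | (rw [if_pos hHq] at hxy) | (rw [if_neg hHq] at hxy)
    all_goals first
      | exact one_ne_zero (congrArg Prod.snd hxy)
      | exact zero_ne_one (congrArg Prod.snd hxy)
  · -- both direction 1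
    rw [Dmap_one, Dmap_one] at hxy
    by_cases hHp : HostsHT n M p <;> by_cases hHq : HostsHT n M q
    · rw [if_pos hHp, if_pos hHq] at hxy
      have h1 : p + (0, 1) = q + (0, 1) := congrArg Prod.fst hxy
      rw [add_right_cancel h1]
    · rw [if_pos hHp, if_neg hHq] at hxy
      exfalso
      have h1 : p + (0, 1) = q + (0, 1) + (0, 1) := congrArg Prod.fst hxy
      have hp : p = q + (0, 1) := add_right_cancel h1
      exact no_adj2 hM (fp_of_not_H hfq hHq).1.1 (hp ▸ hHp.1)
    · rw [if_neg hHp, if_pos hHq] at hxy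
      exfalso
      have h1 : p + (0, 1) + (0, 1) = q + (0, 1) := congrArg Prod.fst hxy
      have hq : q = p + (0, 1) := (add_right_cancel h1).symm
      exact no_adj2 hM (fp_of_not_H hfp hHp).1.1 (hq ▸ hHq.1)
    · rw [if_neg hHp, if_neg hHq] at hxy
      have h1 : p + (0, 1) + (0, 1) = q + (0, 1) + (0, 1) := congrArg Prod.fst hxy
      rw [add_right_cancel (add_right_cancel h1)]

/-- For `n` even with `n ≥ 6`, every perfect matching of `G_n` has at most
`n² / 2` flippable pairs. -/
theorem nflip_le (n : ℕ) (hn : Even n) (h6 : 6 ≤ n) (M : Set (ET n)) (hM : IsPMT n M) :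
    nflipT n M ≤ n ^ 2 / 2 := by
  haveI : NeZero n := ⟨by omega⟩
  haveI : Fact (1 < n) := ⟨by omega⟩
  classical
  set T : Set (VT n × Fin 2) := {x | FlipPairT n M x.1 x.2} with hT
  have himg : flipPairsT n M
      = (fun x : VT n × Fin 2 => ({x.1, x.1 + eT n x.2 + eT n x.2} : Set (VT n))) '' T := by
    ext S
    constructor
    · rintro ⟨p, i, hfp, rfl⟩; exact ⟨(p, i), hfp, rfl⟩
    · rintro ⟨⟨p, i⟩, hfp, rfl⟩; exact ⟨p, i, hfp, rfl⟩
  have hMfin : M.Finite := Set.toFinite M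
  have h1 : nflipT n M ≤ T.ncard := by
    rw [nflipT, himg]
    exact Set.ncard_image_le (Set.toFinite T)
  have h2 : T.ncard ≤ M.ncard :=
    Set.ncard_le_ncard_of_injOn (Dmap n M)
      (fun x hx => by
        obtain ⟨p, i⟩ := x
        exact Dmap_mem hM hx)
      (Dmap_injOn hM) hMfin
  have h3 := two_mul_ncard h6 hM
  omega

end HQDMT
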